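/- Let A ∈ ℝ^{n×d}, y ∈ ℝⁿ and β > 0. Then the infimum, over all widths m and all bias-free parameters (U, w), of the weight-decay objective (1/2)‖(AU)_+ w − y‖₂² + (β/2)(‖w‖₂² + ‖U‖_F²) equals the infimum, over all widths m and all (U, w) with ‖u_j‖₂ ≤ 1 for every j, of the ℓ1-regularized objective (1/2)‖(AU)_+ w − y‖₂² + β‖w‖₁. -/
import Mathlib


open Finset

/-- Euclidean (ℓ2) norm of a finite-dimensional real vector. -/
noncomputable def l2norm {k : ℕ} (x : Fin k → ℝ) : ℝ := Real.sqrt (∑ i, x i ^ 2)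

/-- Output `(AU)_+ w = ∑_j w_j (A u_j)_+` of a bias-free two-layer ReLU network. -/
noncomputable def bfOut {n d m : ℕ} (A : Matrix (Fin n) (Fin d) ℝ)
    (U : Fin m → Fin d → ℝ) (w : Fin m → ℝ) : Fin n → ℝ :=
  ∑ j, w j • fun i => max (A.mulVec (U j) i) 0

lemma relu_smul {n d : ℕ} (A : Matrix (Fin n) (Fin d) ℝ) (u : Fin d → ℝ) {c : ℝ} (hc : 0 ≤ c) :
    (fun i => max (A.mulVec (c • u) i) 0) = c • (fun i => max (A.mulVec u i) 0) := by
  funext i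
  rw [Matrix.mulVec_smul]
  simp only [Pi.smul_apply, smul_eq_mul]
  rw [mul_max_of_nonneg _ _ hc, mul_zero]

lemma l2norm_nonneg {k : ℕ} (x : Fin k → ℝ) : 0 ≤ l2norm x := Real.sqrt_nonneg _

lemma l2norm_sq {k : ℕ} (x : Fin k → ℝ) : l2norm x ^ 2 = ∑ i, x i ^ 2 :=
  Real.sq_sqrt (by positivity)

lemma l2norm_smul {k : ℕ} (c : ℝ) (x : Fin k → ℝ) : l2norm (c • x) = |c| * l2norm x := by
  unfold l2norm
  simp only [Pi.smul_apply, smul_eq_mul, mul_pow, ← Finset.mul_sum]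
  rw [Real.sqrt_mul (sq_nonneg c), Real.sqrt_sq_eq_abs]

lemma l2norm_eq_zero {k : ℕ} {x : Fin k → ℝ} (h : l2norm x = 0) : x = 0 := by
  have hs : (∑ i, x i ^ 2) = 0 := by
    have := Real.sqrt_eq_zero (by positivity : (0:ℝ) ≤ ∑ i, x i ^ 2)
    exact this.mp h
  funext i
  have := (Finset.sum_eq_zero_iff_of_nonneg (fun i _ => sq_nonneg (x i))).mp hs i (mem_univ i)
  exact pow_eq_zero_iff (two_ne_zero) |>.mp this

/-- The weight-decay regularized objective
`(1/2)‖(AU)₊w - y‖₂² + (β/2)(‖w‖₂² + ‖U‖_F²)` has the same infimum over all widths as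
the ℓ1-regularized objective `(1/2)‖(AU)₊w - y‖₂² + β‖w‖₁` over networks with
`‖u_j‖₂ ≤ 1` for all `j`. -/
theorem stmt17 {n d : ℕ} (A : Matrix (Fin n) (Fin d) ℝ) (y : Fin n → ℝ)
    (β : ℝ) (hβ : 0 < β) :
    sInf {r : ℝ | ∃ (m : ℕ) (U : Fin m → Fin d → ℝ) (w : Fin m → ℝ),
        r = (1/2) * (∑ i, (bfOut A U w i - y i) ^ 2) +
          (β/2) * ((∑ j, w j ^ 2) + ∑ j, ∑ k, U j k ^ 2)} =
    sInf {r : ℝ | ∃ (m : ℕ) (U : Fin m → Fin d → ℝ) (w : Fin m → ℝ),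
        (∀ j, l2norm (U j) ≤ 1) ∧
        r = (1/2) * (∑ i, (bfOut A U w i - y i) ^ 2) + β * ∑ j, |w j|} := by
  have hb1 : BddBelow {r : ℝ | ∃ (m : ℕ) (U : Fin m → Fin d → ℝ) (w : Fin m → ℝ),
      r = (1/2) * (∑ i, (bfOut A U w i - y i) ^ 2) +
        (β/2) * ((∑ j, w j ^ 2) + ∑ j, ∑ k, U j k ^ 2)} := by
    refine ⟨0, ?_⟩
    rintro r ⟨m, U, w, rfl⟩
    have h1 : (0:ℝ) ≤ ∑ i, (bfOut A U w i - y i) ^ 2 := by positivity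
    have h2 : (0:ℝ) ≤ ∑ j, w j ^ 2 := by positivity
    have h3 : (0:ℝ) ≤ ∑ j, ∑ k, U j k ^ 2 := by positivity
    have := hβ.le
    positivity
  have hb2 : BddBelow {r : ℝ | ∃ (m : ℕ) (U : Fin m → Fin d → ℝ) (w : Fin m → ℝ),
      (∀ j, l2norm (U j) ≤ 1) ∧
      r = (1/2) * (∑ i, (bfOut A U w i - y i) ^ 2) + β * ∑ j, |w j|} := by
    refine ⟨0, ?_⟩
    rintro r ⟨m, U, w, _, rfl⟩
    have h1 : (0:ℝ) ≤ ∑ i, (bfOut A U w i - y i) ^ 2 := by positivity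
    have h2 : (0:ℝ) ≤ ∑ j, |w j| := by positivity
    have := hβ.le
    positivity
  have hne1 : Set.Nonempty {r : ℝ | ∃ (m : ℕ) (U : Fin m → Fin d → ℝ) (w : Fin m → ℝ),
      r = (1/2) * (∑ i, (bfOut A U w i - y i) ^ 2) +
        (β/2) * ((∑ j, w j ^ 2) + ∑ j, ∑ k, U j k ^ 2)} :=
    ⟨_, 0, (fun j => j.elim0), (fun j => j.elim0), rfl⟩
  have hne2 : Set.Nonempty {r : ℝ | ∃ (m : ℕ) (U : Fin m → Fin d → ℝ) (w : Fin m → ℝ),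
      (∀ j, l2norm (U j) ≤ 1) ∧
      r = (1/2) * (∑ i, (bfOut A U w i - y i) ^ 2) + β * ∑ j, |w j|} :=
    ⟨_, 0, (fun j => j.elim0), (fun j => j.elim0), (fun j => j.elim0), rfl⟩
  apply le_antisymm
  · -- weight-decay inf ≤ ℓ1 inf
    apply le_csInf hne2
    rintro r ⟨m, U, w, hU, rfl⟩
    set c : Fin m → ℝ := fun j => Real.sqrt |w j| with hcdef
    have hc0 : ∀ j, 0 ≤ c j := fun j => Real.sqrt_nonneg _
    have hcsq : ∀ j, c j ^ 2 = |w j| := fun j => Real.sq_sqrt (abs_nonneg _)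
    refine csInf_le_of_le hb1
      ⟨m, fun j => c j • U j, fun j => if w j < 0 then -c j else c j, rfl⟩ ?_
    have hout : bfOut A (fun j => c j • U j) (fun j => if w j < 0 then -c j else c j)
        = bfOut A U w := by
      unfold bfOut
      refine Finset.sum_congr rfl fun j _ => ?_
      rw [relu_smul A (U j) (hc0 j), smul_smul]
      congr 1
      by_cases h : w j < 0
      · simp only [h, if_true]
        have : -c j * c j = -(c j ^ 2) := by ring
        rw [this, hcsq j, abs_of_neg h, neg_neg]
      · simp only [h, if_false]
        have : c j * c j = c j ^ 2 := by ring
        rw [this, hcsq j, abs_of_nonneg (not_lt.mp h)]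
    rw [hout]
    have hwsq : (∑ j, (if w j < 0 then -c j else c j) ^ 2) = ∑ j, |w j| := by
      refine Finset.sum_congr rfl fun j _ => ?_
      by_cases h : w j < 0
      · rw [if_pos h, neg_sq, hcsq j]
      · rw [if_neg h, hcsq j]
    have hUsq : (∑ j, ∑ k, (c j • U j) k ^ 2) ≤ ∑ j, |w j| := by
      refine Finset.sum_le_sum fun j _ => ?_
      have hs : (∑ k, U j k ^ 2) ≤ 1 := by
        have h1 : l2norm (U j) ^ 2 ≤ 1 ^ 2 :=
          pow_le_pow_left₀ (l2norm_nonneg _) (hU j) 2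
        rw [l2norm_sq, one_pow] at h1
        exact h1
      have : (∑ k, (c j • U j) k ^ 2) = |w j| * ∑ k, U j k ^ 2 := by
        simp only [Pi.smul_apply, smul_eq_mul, mul_pow, ← Finset.mul_sum, hcsq j]
      rw [this]
      calc |w j| * ∑ k, U j k ^ 2 ≤ |w j| * 1 :=
            mul_le_mul_of_nonneg_left hs (abs_nonneg _)
        _ = |w j| := mul_one _
    rw [hwsq]
    have hmul := mul_le_mul_of_nonneg_left hUsq (by linarith : (0:ℝ) ≤ β / 2)
    linarith
  · -- ℓ1 inf ≤ weight-decay inf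
    apply le_csInf hne1
    rintro r ⟨m, U, w, rfl⟩
    set ν : Fin m → ℝ := fun j => l2norm (U j) with hνdef
    have hν0 : ∀ j, 0 ≤ ν j := fun j => l2norm_nonneg _
    have hcond : ∀ j, l2norm ((ν j)⁻¹ • U j) ≤ 1 := by
      intro j
      rw [l2norm_smul, abs_of_nonneg (inv_nonneg.mpr (hν0 j))]
      by_cases h : ν j = 0
      · simp [hνdef ▸ h, h]
      · rw [inv_mul_cancel₀ h]
    refine csInf_le_of_le hb2
      ⟨m, fun j => (ν j)⁻¹ • U j, fun j => w j * ν j, hcond, rfl⟩ ?_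
    have hout : bfOut A (fun j => (ν j)⁻¹ • U j) (fun j => w j * ν j) = bfOut A U w := by
      unfold bfOut
      refine Finset.sum_congr rfl fun j _ => ?_
      by_cases h : ν j = 0
      · have hU0 : U j = 0 := l2norm_eq_zero h
        have hz : (fun i : Fin n => max (A.mulVec (U j) i) 0) = 0 := by
          funext i; simp [hU0, Matrix.mulVec_zero]
        have hz' : (fun i : Fin n => max (A.mulVec ((ν j)⁻¹ • U j) i) 0) = 0 := by
          funext i; simp [hU0, Matrix.mulVec_zero]
        rw [hz, hz', smul_zero, smul_zero]
      · rw [relu_smul A (U j) (inv_nonneg.mpr (hν0 j)), smul_smul]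
        congr 1
        field_simp
    rw [hout]
    have hl1 : (∑ j, |w j * ν j|) ≤
        (1/2) * ((∑ j, w j ^ 2) + ∑ j, ∑ k, U j k ^ 2) := by
      have key : ∀ j, |w j * ν j| ≤ (w j ^ 2 + ∑ k, U j k ^ 2) / 2 := by
        intro j
        have hνsq : ν j ^ 2 = ∑ k, U j k ^ 2 := l2norm_sq (U j)
        have h2 : 2 * |w j| * ν j ≤ |w j| ^ 2 + ν j ^ 2 := two_mul_le_add_sq _ _
        rw [sq_abs] at h2
        rw [abs_mul, abs_of_nonneg (hν0 j), ← hνsq]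
        linarith
      calc (∑ j, |w j * ν j|) ≤ ∑ j, (w j ^ 2 + ∑ k, U j k ^ 2) / 2 :=
            Finset.sum_le_sum fun j _ => key j
        _ = (1/2) * ((∑ j, w j ^ 2) + ∑ j, ∑ k, U j k ^ 2) := by
            rw [← Finset.sum_div, Finset.sum_add_distrib]
            ring
    have hmul := mul_le_mul_of_nonneg_left hl1 hβ.le
    linarith
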